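/- Let P_1, …, P_m be a Clifford system of signature (m, r) on ℝ^{2l}_s with m ≡ 0 (mod 4), r ≡ 0 (mod 2), s ≤ 2l − 1, and l > m, set P := P_1P_2⋯P_m, and let L be a connected component of M_+ (M_+ is non-empty). Then there exist x ∈ E_+(P) \ {0} and y ∈ E_−(P) \ {0} such that x + y ∈ L. -/

import Mathlib

/-!
`P = P₁ ⋯ Pₘ` is a `⟨·,·⟩`-symmetric involution anticommuting with every `Pⱼ`: the signs picked up
by reversing the product (`(-1)^(m choose 2)`), by squaring it (the same sign times `∏ Pⱼ²`) and by
moving a `Pⱼ` across it (`(-1)^(m-1)`) are all fixed by `m ≡ 0 (mod 4)` and `r` even. Hence each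
`Pⱼ` exchanges `E₊(P)` and `E₋(P)`, both eigenspaces have dimension `l`, they are
`⟨·,·⟩`-orthogonal, and every eigenvector `z` of `P` satisfies `⟨Pⱼ z, z⟩ = 0`.

A point of `M₊` with nonzero components in both eigenspaces is the required point of its own
component. If `x₀ ∈ M₊` lies in one eigenspace, say `E₊`, choose `0 ≠ w ∈ E₋` orthogonal to the
`m < l` vectors `Pⱼ x₀`; then `t ↦ √(1 - ⟨w,w⟩ t²) x₀ + t w` runs inside `M₊` for small `t ≥ 0`
and leaves `E₊` at once. For non-emptiness, normalise the eigencomponent of positive norm of a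
standard basis vector `e` with `⟨e,e⟩ = 1`, which exists since `s < 2l`.
-/

open Matrix

noncomputable section

/-- Entries of the signature matrix `J_{r,m-r}`, with 1-based indices:
`η_{ii} = -1` for `1 ≤ i ≤ r` and `η_{ii} = 1` for `r < i`; off-diagonal entries vanish. -/
def cliffEta (r i j : ℕ) : ℝ :=
  if i = j then (if i ≤ r then -1 else 1) else 0

/-- The matrix `J_{s,n-s} = diag(-E_s, E_{n-s})`. -/
def psJ (n s : ℕ) : Matrix (Fin n) (Fin n) ℝ :=
  Matrix.diagonal fun i => if (i : ℕ) < s then (-1 : ℝ) else 1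

/-- The pseudo-inner product `⟨u, v⟩ = uᵀ J_{s,n-s} v` of `ℝ^n_s`. -/
def psInner (n s : ℕ) (u v : Fin n → ℝ) : ℝ :=
  u ⬝ᵥ ((psJ n s) *ᵥ v)

/-- A Clifford system of signature `(m, r)` on `ℝ^{2l}_s`, indexed by `1, …, m`:
each `P i` is symmetric with respect to the pseudo-inner product, and
`P i * P j + P j * P i = 2 η_{ij} E_{2l}`. -/
def IsCliffordSystem (l s m r : ℕ)
    (P : ℕ → Matrix (Fin (2 * l)) (Fin (2 * l)) ℝ) : Prop :=
  (∀ i ∈ Finset.Icc 1 m, (P i)ᵀ = psJ (2 * l) s * P i * psJ (2 * l) s) ∧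
  (∀ i ∈ Finset.Icc 1 m, ∀ j ∈ Finset.Icc 1 m,
    P i * P j + P j * P i
      = (2 * cliffEta r i j) • (1 : Matrix (Fin (2 * l)) (Fin (2 * l)) ℝ))

open Finset Module
open LinearMap (BilinForm)
open Module.End (eigenspace mem_eigenspace_iff)

theorem Nat.succ_choose_two (k : ℕ) : (k + 1).choose 2 = k.choose 2 + k := by
  simp [Nat.choose_succ_succ, add_comm]

theorem Nat.even_choose_two_of_four_dvd {m : ℕ} (hm : 4 ∣ m) : Even (m.choose 2) := by
  obtain ⟨t, rfl⟩ := hm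
  rw [Nat.choose_two_right, show 4 * t * (4 * t - 1) = 2 * (2 * t * (4 * t - 1)) by ring,
    Nat.mul_div_cancel_left _ (by norm_num : 0 < 2)]
  exact (even_two_mul t).mul_right _

section CliffordProd

variable {R : Type*} [Ring R]

def cliffordProd (P : ℕ → R) (k : ℕ) : R :=
  ((List.range k).map fun j => P (1 + j)).prod

theorem cliffordProd_succ (P : ℕ → R) (k : ℕ) :
    cliffordProd P (k + 1) = cliffordProd P k * P (k + 1) := by
  simp [cliffordProd, List.range_succ, add_comm]

variable {P : ℕ → R} {m r : ℕ}
  (hanti : ∀ i ∈ Icc 1 m, ∀ j ∈ Icc 1 m, i ≠ j → P i * P j = -(P j * P i))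
include hanti

theorem mul_cliffordProd_of_lt {a k : ℕ} (ha : a ≤ m) (hka : k < a) :
    P a * cliffordProd P k = (-1) ^ k * (cliffordProd P k * P a) := by
  induction k with
  | zero => simp [cliffordProd]
  | succ k ih =>
    have hswap := hanti a (by simp; omega) (k + 1) (by simp; omega) (by omega)
    rw [cliffordProd_succ, ← mul_assoc, ih (by omega), mul_assoc, mul_assoc, hswap]
    noncomm_ring

theorem mul_cliffordProd_of_le {a k : ℕ} (ha : 1 ≤ a) (hak : a ≤ k) (hk : k ≤ m) :
    P a * cliffordProd P k = -((-1) ^ k * (cliffordProd P k * P a)) := by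
  induction k, hak using Nat.le_induction with
  | base =>
    obtain ⟨b, rfl⟩ : ∃ b, a = b + 1 := ⟨a - 1, by omega⟩
    rw [cliffordProd_succ, ← mul_assoc, mul_cliffordProd_of_lt hanti hk (by omega)]
    noncomm_ring
  | succ k hak ih =>
    have hswap := hanti a (by simp; omega) (k + 1) (by simp; omega) (by omega)
    rw [cliffordProd_succ, ← mul_assoc, ih (by omega), neg_mul, mul_assoc, mul_assoc, hswap]
    noncomm_ring

theorem reverse_prod_eq_neg_one_pow_mul_cliffordProd {k : ℕ} (hk : k ≤ m) :
    ((List.range k).map fun j => P (1 + j)).reverse.prod =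
      (-1) ^ k.choose 2 * cliffordProd P k := by
  induction k with
  | zero => simp [cliffordProd]
  | succ k ih =>
    rw [List.range_succ, List.map_append, List.reverse_append, List.prod_append, ih (by omega)]
    simp only [List.map_cons, List.map_nil, List.reverse_singleton, List.prod_singleton]
    have hsign : Commute (P (k + 1)) ((-1 : R) ^ k.choose 2) :=
      (Commute.neg_one_right _).pow_right _
    rw [← mul_assoc, add_comm 1 k, hsign.eq, mul_assoc,
      mul_cliffordProd_of_lt hanti hk (Nat.lt_succ_self k),
      cliffordProd_succ, ← mul_assoc, ← pow_add, Nat.succ_choose_two, add_comm k]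

theorem cliffordProd_mul_self
    (hsq : ∀ i ∈ Icc 1 m, P i * P i = if i ≤ r then -1 else 1) {k : ℕ} (hk : k ≤ m) :
    cliffordProd P k * cliffordProd P k = (-1) ^ (k.choose 2 + min k r) := by
  induction k with
  | zero => simp [cliffordProd]
  | succ k ih =>
    rw [cliffordProd_succ, mul_assoc, ← mul_assoc (P (k + 1)),
      mul_cliffordProd_of_lt hanti hk (Nat.lt_succ_self k)]
    have hsign : Commute ((-1 : R) ^ k) (cliffordProd P k) := (Commute.neg_one_left _).pow_left k
    calc _ = (-1) ^ k * (cliffordProd P k * cliffordProd P k) * (P (k + 1) * P (k + 1)) := by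
          rw [← mul_assoc, ← mul_assoc, ← hsign.eq]; simp only [mul_assoc]
      _ = _ := by
          rw [ih (by omega), hsq (k + 1) (by simp; omega), ← pow_add, Nat.succ_choose_two]
          split_ifs
          · rw [← pow_succ]; congr 1; omega
          · rw [mul_one]; congr 1; omega

end CliffordProd

theorem mem_connectedComponentIn_of_continuousOn {X : Type*} [TopologicalSpace X] {F : Set X}
    {γ : ℝ → X} {a b : ℝ} (hab : a ≤ b) (hγ : ContinuousOn γ (Set.Icc a b))
    (hF : Set.MapsTo γ (Set.Icc a b) F) : γ b ∈ connectedComponentIn F (γ a) :=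
  (isPreconnected_Icc.image γ hγ).subset_connectedComponentIn
    (Set.mem_image_of_mem γ (Set.left_mem_Icc.mpr hab)) hF.image_subset
    (Set.mem_image_of_mem γ (Set.right_mem_Icc.mpr hab))

theorem exists_pos_forall_mul_sq_lt_one (c : ℝ) : ∃ t > 0, ∀ τ ∈ Set.Icc 0 t, c * τ ^ 2 < 1 := by
  refine ⟨(|c| + 1)⁻¹, by positivity, fun τ ⟨hτ₀, hτ⟩ => ?_⟩
  have hτc : τ * (|c| + 1) ≤ 1 := by
    calc τ * (|c| + 1) ≤ (|c| + 1)⁻¹ * (|c| + 1) := by gcongr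
      _ = 1 := inv_mul_cancel₀ (by positivity)
  nlinarith [le_abs_self c, abs_nonneg c, mul_nonneg hτ₀ (abs_nonneg c)]

section Involution

variable {K V : Type*} [Field K] [AddCommGroup V] [Module K V] {A : Module.End K V}

theorem Module.End.apply_apply_of_mul_self_eq_one (hA : A * A = 1) (x : V) : A (A x) = x := by
  rw [← Module.End.mul_apply, hA, Module.End.one_apply]

theorem Module.End.exists_add_eq_of_mul_self_eq_one [NeZero (2 : K)] (hA : A * A = 1) (x : V) :
    ∃ u v, A u = u ∧ A v = -v ∧ u + v = x := by
  refine ⟨(2 : K)⁻¹ • (x + A x), (2 : K)⁻¹ • (x - A x), ?_, ?_, ?_⟩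
  · simp [apply_apply_of_mul_self_eq_one hA, add_comm]
  · rw [map_smul, map_sub, apply_apply_of_mul_self_eq_one hA, ← smul_neg, neg_sub]
  · rw [← smul_add, add_add_sub_cancel, ← two_smul K x, smul_smul, inv_mul_cancel₀ two_ne_zero,
      one_smul]

theorem Module.End.isCompl_eigenspace_one_neg_one [NeZero (2 : K)] (hA : A * A = 1) :
    IsCompl (eigenspace A 1) (eigenspace A (-1)) := by
  constructor
  · rw [Submodule.disjoint_def]
    intro x h₁ hneg
    rw [mem_eigenspace_iff, one_smul] at h₁
    rw [mem_eigenspace_iff, h₁, neg_one_smul, eq_neg_iff_add_eq_zero, ← two_smul K] at hneg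
    exact (smul_eq_zero.mp hneg).resolve_left two_ne_zero
  · rw [codisjoint_iff, Submodule.eq_top_iff']
    intro x
    obtain ⟨u, v, hu, hv, rfl⟩ := exists_add_eq_of_mul_self_eq_one hA x
    exact Submodule.add_mem_sup (by rwa [mem_eigenspace_iff, one_smul])
      (by rwa [mem_eigenspace_iff, neg_one_smul])

theorem Module.End.apply_mem_eigenspace_neg_of_anticomm {g : Module.End K V}
    (hgA : A * g = -(g * A)) {μ : K} {x : V} (hx : x ∈ eigenspace A μ) :
    g x ∈ eigenspace A (-μ) := by
  rw [mem_eigenspace_iff] at hx ⊢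
  rw [← Module.End.mul_apply, hgA, LinearMap.neg_apply, Module.End.mul_apply, hx, map_smul,
    neg_smul]

theorem Module.End.finrank_eigenspace_neg_eq_of_anticomm [FiniteDimensional K V]
    {g : Module.End K V} (hg : IsUnit g) (hgA : A * g = -(g * A)) (μ : K) :
    finrank K (eigenspace A (-μ)) = finrank K (eigenspace A μ) := by
  have hle : ∀ μ : K, finrank K (eigenspace A μ) ≤ finrank K (eigenspace A (-μ)) := fun μ => by
    rw [← (LinearEquiv.ofBijective g ((Module.End.isUnit_iff g).mp hg)).finrank_map_eq]
    exact Submodule.finrank_mono (Submodule.map_le_iff_le_comap.mpr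
      fun x hx => apply_mem_eigenspace_neg_of_anticomm hgA hx)
  refine le_antisymm ?_ (hle μ)
  calc finrank K (eigenspace A (-μ)) ≤ finrank K (eigenspace A (- -μ)) := hle (-μ)
    _ = finrank K (eigenspace A μ) := by rw [neg_neg]

theorem Module.End.eigenspace_neg (A : Module.End K V) (μ : K) :
    eigenspace (-A) (-μ) = eigenspace A μ := by
  ext x
  simp only [mem_eigenspace_iff, LinearMap.neg_apply, neg_smul, neg_inj]

end Involution

theorem Submodule.exists_mem_ne_zero_forall_eq_zero_of_card_lt_finrank {K V ι : Type*} [Field K]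
    [AddCommGroup V] [Module K V] [FiniteDimensional K V] (W : Submodule K V) {S : Finset ι}
    (hS : S.card < finrank K W) (φ : ι → Module.Dual K V) :
    ∃ w ∈ W, w ≠ 0 ∧ ∀ j ∈ S, φ j w = 0 := by
  let Φ : W →ₗ[K] (S → K) := LinearMap.pi fun j => (φ j).comp W.subtype
  have hΦ : LinearMap.ker Φ ≠ ⊥ :=
    LinearMap.ker_ne_bot_of_finrank_lt (by simpa [Module.finrank_fintype_fun_eq_card] using hS)
  obtain ⟨w, hw, hw0⟩ := Submodule.exists_mem_ne_zero_of_ne_bot hΦ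
  refine ⟨w, w.2, by simpa using hw0, fun j hj => ?_⟩
  simpa [Φ] using congrFun (LinearMap.mem_ker.mp hw) ⟨j, hj⟩

section Focal

variable {V ι : Type*} [AddCommGroup V] [Module ℝ V]

/-- The set `M₊`, with a bilinear form `B` in place of `⟨·,·⟩` and endomorphisms `f j` in place
of the `Pⱼ`. -/
def focalSet (B : BilinForm ℝ V) (S : Finset ι) (f : ι → Module.End ℝ V) : Set V :=
  {x | B x x = 1 ∧ ∀ j ∈ S, B (f j x) x = 0}

structure IsAnticommutingInvolution (B : BilinForm ℝ V) (S : Finset ι)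
    (f : ι → Module.End ℝ V) (A : Module.End ℝ V) : Prop where
  mul_self : A * A = 1
  isAdjointPair : LinearMap.IsAdjointPair B B A A
  anticomm : ∀ j ∈ S, A * f j = -(f j * A)

namespace IsAnticommutingInvolution

variable {B : BilinForm ℝ V} {S : Finset ι} {f : ι → Module.End ℝ V} {A : Module.End ℝ V}
  (hA : IsAnticommutingInvolution B S f A)
include hA

theorem neg : IsAnticommutingInvolution B S f (-A) where
  mul_self := by rw [neg_mul_neg, hA.mul_self]
  isAdjointPair x y := by simp [hA.isAdjointPair x y]
  anticomm j hj := by rw [neg_mul, mul_neg, hA.anticomm j hj]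

theorem bilin_eq_zero_of_apply_eq_self_of_apply_eq_neg {u v : V} (hu : A u = u)
    (hv : A v = -v) : B u v = 0 ∧ B v u = 0 := by
  have huv := hA.isAdjointPair u v
  have hvu := hA.isAdjointPair v u
  rw [hu, hv, map_neg] at huv
  rw [hu, hv, map_neg, LinearMap.neg_apply] at hvu
  constructor <;> linarith

theorem bilin_apply_self_eq_zero_of_apply_eq_self {j : ι} (hj : j ∈ S) {z : V} (hz : A z = z) :
    B (f j z) z = 0 := by
  refine (hA.bilin_eq_zero_of_apply_eq_self_of_apply_eq_neg hz ?_).2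
  rw [← Module.End.mul_apply, hA.anticomm j hj, LinearMap.neg_apply, Module.End.mul_apply, hz]

theorem bilin_apply_self_eq_zero_of_apply_eq_neg {j : ι} (hj : j ∈ S) {z : V} (hz : A z = -z) :
    B (f j z) z = 0 :=
  hA.neg.bilin_apply_self_eq_zero_of_apply_eq_self hj (by rw [LinearMap.neg_apply, hz, neg_neg])

theorem inv_sqrt_smul_mem_focalSet {z : V} (hz : A z = z ∨ A z = -z) (hpos : 0 < B z z) :
    (√(B z z))⁻¹ • z ∈ focalSet B S f := by
  refine ⟨?_, fun j hj => ?_⟩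
  · simp only [map_smul, LinearMap.smul_apply, smul_eq_mul]
    field_simp
    rw [Real.sq_sqrt hpos.le]
  · simp [hz.elim (hA.bilin_apply_self_eq_zero_of_apply_eq_self hj)
      (hA.bilin_apply_self_eq_zero_of_apply_eq_neg hj)]

theorem focalSet_nonempty {e : V} (he : 0 < B e e) : (focalSet B S f).Nonempty := by
  obtain ⟨u, v, hu, hv, rfl⟩ := Module.End.exists_add_eq_of_mul_self_eq_one hA.mul_self e
  obtain ⟨huv, hvu⟩ := hA.bilin_eq_zero_of_apply_eq_self_of_apply_eq_neg hu hv
  have hsum : B (u + v) (u + v) = B u u + B v v := by simp [huv, hvu]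
  rcases lt_or_ge 0 (B u u) with hpos | hnonpos
  · exact ⟨_, hA.inv_sqrt_smul_mem_focalSet (Or.inl hu) hpos⟩
  · exact ⟨_, hA.inv_sqrt_smul_mem_focalSet (Or.inr hv) (by linarith)⟩

theorem sqrt_smul_add_smul_mem_focalSet (hB : B.IsSymm)
    (hf : ∀ j ∈ S, LinearMap.IsAdjointPair B B (f j) (f j)) {x w : V} (hx : x ∈ focalSet B S f)
    (hAx : A x = x) (hAw : A w = -w) (hxw : ∀ j ∈ S, B (f j x) w = 0) {t : ℝ}
    (ht : B w w * t ^ 2 < 1) :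
    √(1 - B w w * t ^ 2) • x + t • w ∈ focalSet B S f := by
  obtain ⟨hxx, hfx⟩ := hx
  obtain ⟨hx_w, hw_x⟩ := hA.bilin_eq_zero_of_apply_eq_self_of_apply_eq_neg hAx hAw
  have hsqrt := Real.sq_sqrt (sub_nonneg.mpr ht.le)
  refine ⟨?_, fun j hj => ?_⟩
  · simp only [map_add, map_smul, LinearMap.add_apply, LinearMap.smul_apply, smul_eq_mul, hxx,
      hx_w, hw_x]
    linear_combination hsqrt
  · have hwfx : B (f j w) x = 0 := by rw [hf j hj, hB.eq, hxw j hj]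
    simp only [map_add, map_smul, LinearMap.add_apply, LinearMap.smul_apply, smul_eq_mul,
      hfx j hj, hxw j hj, hwfx, hA.bilin_apply_self_eq_zero_of_apply_eq_neg hj hAw]
    ring

variable [FiniteDimensional ℝ V] [TopologicalSpace V] [ContinuousAdd V] [ContinuousSMul ℝ V]

theorem exists_mixed_mem_connectedComponentIn_of_apply_eq_self (hB : B.IsSymm)
    (hf : ∀ j ∈ S, LinearMap.IsAdjointPair B B (f j) (f j))
    (hdim : S.card < finrank ℝ (eigenspace A (-1))) {x₀ : V} (hx₀ : x₀ ∈ focalSet B S f)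
    (hAx₀ : A x₀ = x₀) :
    ∃ x y, A x = x ∧ x ≠ 0 ∧ A y = -y ∧ y ≠ 0 ∧
      x + y ∈ connectedComponentIn (focalSet B S f) x₀ := by
  obtain ⟨w, hw, hw0, hxw⟩ :=
    (eigenspace A (-1)).exists_mem_ne_zero_forall_eq_zero_of_card_lt_finrank hdim
      fun j => B (f j x₀)
  rw [mem_eigenspace_iff, neg_one_smul] at hw
  obtain ⟨t, ht0, ht⟩ := exists_pos_forall_mul_sq_lt_one (B w w)
  let γ : ℝ → V := fun τ => √(1 - B w w * τ ^ 2) • x₀ + τ • w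
  have hγ : γ t ∈ connectedComponentIn (focalSet B S f) (γ 0) :=
    mem_connectedComponentIn_of_continuousOn ht0.le (by fun_prop)
      fun τ hτ => hA.sqrt_smul_add_smul_mem_focalSet hB hf hx₀ hAx₀ hw hxw (ht τ hτ)
  have hx₀0 : x₀ ≠ 0 := by rintro rfl; simp [focalSet] at hx₀
  have hsqrt : √(1 - B w w * t ^ 2) ≠ 0 :=
    Real.sqrt_ne_zero'.mpr (by linarith [ht t ⟨ht0.le, le_rfl⟩])
  refine ⟨√(1 - B w w * t ^ 2) • x₀, t • w, by rw [map_smul, hAx₀], smul_ne_zero hsqrt hx₀0,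
    by rw [map_smul, hw, smul_neg], smul_ne_zero ht0.ne' hw0, by simpa [γ] using hγ⟩

theorem exists_mixed_mem_connectedComponentIn (hB : B.IsSymm)
    (hf : ∀ j ∈ S, LinearMap.IsAdjointPair B B (f j) (f j))
    (hdim : S.card < finrank ℝ (eigenspace A 1)) (hdim' : S.card < finrank ℝ (eigenspace A (-1)))
    {x₀ : V} (hx₀ : x₀ ∈ focalSet B S f) :
    ∃ x y, A x = x ∧ x ≠ 0 ∧ A y = -y ∧ y ≠ 0 ∧
      x + y ∈ connectedComponentIn (focalSet B S f) x₀ := by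
  obtain ⟨u, v, hu, hv, rfl⟩ := Module.End.exists_add_eq_of_mul_self_eq_one hA.mul_self x₀
  by_cases hv0 : v = 0
  · subst hv0
    rw [add_zero] at hx₀ ⊢
    exact hA.exists_mixed_mem_connectedComponentIn_of_apply_eq_self hB hf hdim' hx₀ hu
  by_cases hu0 : u = 0
  -- `x₀` lies in `E₋(A) = E₊(-A)`: escape with the roles of the eigenspaces swapped.
  · subst hu0
    rw [zero_add] at hx₀ ⊢
    obtain ⟨x, y, hx, hx0, hy, hy0, hxy⟩ :=
      hA.neg.exists_mixed_mem_connectedComponentIn_of_apply_eq_self hB hf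
        (by rwa [Module.End.eigenspace_neg]) hx₀ (by rw [LinearMap.neg_apply, hv, neg_neg])
    refine ⟨y, x, ?_, hy0, ?_, hx0, by rwa [add_comm]⟩
    · rwa [LinearMap.neg_apply, neg_inj] at hy
    · rwa [LinearMap.neg_apply, neg_eq_iff_eq_neg] at hx
  exact ⟨u, v, hu, hu0, hv, hv0, mem_connectedComponentIn hx₀⟩

end IsAnticommutingInvolution

end Focal

theorem LinearMap.IsAdjointPair.list_prod {R M : Type*} [CommSemiring R] [AddCommMonoid M]
    [Module R M] {B : BilinForm R M} {L : List (Module.End R M)}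
    (hL : ∀ g ∈ L, IsAdjointPair B B g g) : IsAdjointPair B B L.prod L.reverse.prod := by
  induction L with
  | nil => exact LinearMap.isAdjointPair_one
  | cons g L ih =>
    rw [List.prod_cons, List.reverse_cons, List.prod_append, List.prod_singleton]
    exact (hL g List.mem_cons_self).mul (ih fun g' hg' => hL g' (List.mem_cons_of_mem g hg'))

theorem Matrix.isAdjointPair_toLin'_of_transpose_eq {R n : Type*} [CommRing R] [Fintype n]
    [DecidableEq n] {J A : Matrix n n R} (hJ : J * J = 1) (hA : Aᵀ = J * A * J) :
    LinearMap.IsAdjointPair (toBilin' J) (toBilin' J) (toLin' A) (toLin' A) :=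
  (isAdjointPair_toLinearMap₂' J J A A).mpr (by
    rw [Matrix.IsAdjointPair, hA, Matrix.mul_assoc, hJ, Matrix.mul_one])

theorem psInner_eq_toBilin' (n s : ℕ) (u v : Fin n → ℝ) :
    psInner n s u v = toBilin' (psJ n s) u v :=
  (Matrix.toBilin'_apply' _ _ _).symm

theorem psJ_mul_self (n s : ℕ) : psJ n s * psJ n s = 1 := by
  rw [psJ, diagonal_mul_diagonal]
  convert diagonal_one with i
  split_ifs <;> norm_num

theorem isSymm_toBilin'_psJ (n s : ℕ) : (toBilin' (psJ n s)).IsSymm :=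
  Matrix.isSymm_toBilin'_iff_isSymm.mpr (isSymm_diagonal _)

namespace IsCliffordSystem

variable {l s m r : ℕ} {P : ℕ → Matrix (Fin (2 * l)) (Fin (2 * l)) ℝ}
  (hP : IsCliffordSystem l s m r P)
include hP

theorem anticomm : ∀ i ∈ Icc 1 m, ∀ j ∈ Icc 1 m, i ≠ j → P i * P j = -(P j * P i) :=
  fun i hi j hj hij => eq_neg_of_add_eq_zero_left (by simpa [cliffEta, hij] using hP.2 i hi j hj)

theorem mul_self : ∀ i ∈ Icc 1 m, P i * P i = if i ≤ r then -1 else 1 := by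
  intro i hi
  have h := hP.2 i hi i hi
  rw [← two_smul ℝ, cliffEta, if_pos rfl, ← smul_smul] at h
  rw [smul_right_injective _ two_ne_zero h]
  split_ifs <;> simp

theorem isUnit {i : ℕ} (hi : i ∈ Icc 1 m) : IsUnit (P i) := by
  have h := hP.mul_self i hi
  split_ifs at h
  · exact IsUnit.of_mul_eq_one (-P i) (by rw [mul_neg, h, neg_neg])
  · exact IsUnit.of_mul_eq_one (P i) h

theorem isAdjointPair {j : ℕ} (hj : j ∈ Icc 1 m) :
    LinearMap.IsAdjointPair (toBilin' (psJ (2 * l) s)) (toBilin' (psJ (2 * l) s))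
      (toLinAlgEquiv' (P j)) (toLinAlgEquiv' (P j)) :=
  isAdjointPair_toLin'_of_transpose_eq (psJ_mul_self _ _) (hP.1 j hj)

theorem isAnticommutingInvolution (hm : 4 ∣ m) (hr : Even r) :
    IsAnticommutingInvolution (toBilin' (psJ (2 * l) s)) (Icc 1 m)
      (fun j => toLinAlgEquiv' (P j)) (toLinAlgEquiv' (cliffordProd P m)) := by
  have hm2 : Even m := even_iff_two_dvd.mpr ((by norm_num : 2 ∣ 4).trans hm)
  have hchoose := Nat.even_choose_two_of_four_dvd hm
  refine ⟨?_, ?_, fun j hj => ?_⟩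
  · have hmin : Even (min m r) := by rcases min_choice m r with h | h <;> rw [h] <;> assumption
    rw [← map_mul, cliffordProd_mul_self hP.anticomm hP.mul_self le_rfl,
      (hchoose.add hmin).neg_one_pow, map_one]
  · have hrev := reverse_prod_eq_neg_one_pow_mul_cliffordProd (P := P) hP.anticomm le_rfl
    rw [hchoose.neg_one_pow, one_mul] at hrev
    nth_rewrite 2 [← hrev]
    rw [cliffordProd, map_list_prod, map_list_prod, List.map_reverse, List.map_map]
    refine LinearMap.IsAdjointPair.list_prod fun g hg => ?_
    obtain ⟨j, hj, rfl⟩ := List.mem_map.mp hg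
    exact hP.isAdjointPair (by simp at hj ⊢; omega)
  · have h := mul_cliffordProd_of_le hP.anticomm (mem_Icc.mp hj).1 (mem_Icc.mp hj).2 le_rfl
    rw [hm2.neg_one_pow, one_mul] at h
    simp only [← map_mul, ← map_neg, h, neg_neg]

end IsCliffordSystem

theorem component_contains_mixed_point_general (l s m r : ℕ) (hs : s ≤ 2 * l - 1)
    (hm : 2 ≤ m) (hm4 : m % 4 = 0) (hr2 : r % 2 = 0) (hlm : m < l)
    (P : ℕ → Matrix (Fin (2 * l)) (Fin (2 * l)) ℝ)
    (hP : IsCliffordSystem l s m r P)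
    (Pm : Matrix (Fin (2 * l)) (Fin (2 * l)) ℝ)
    (hPm : Pm = ((List.range m).map fun k => P (1 + k)).prod)
    (Mp : Set (Fin (2 * l) → ℝ))
    (hMp : Mp = {x | psInner (2 * l) s x x = 1 ∧
      ∀ j ∈ Finset.Icc 1 m, psInner (2 * l) s (P j *ᵥ x) x = 0}) :
    Mp.Nonempty ∧
    ∀ x₀ ∈ Mp, ∃ x y : Fin (2 * l) → ℝ,
      Pm *ᵥ x = x ∧ x ≠ 0 ∧ Pm *ᵥ y = -y ∧ y ≠ 0 ∧
      x + y ∈ connectedComponentIn Mp x₀ := by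
  set B := toBilin' (psJ (2 * l) s)
  set f : ℕ → Module.End ℝ (Fin (2 * l) → ℝ) := fun j => toLinAlgEquiv' (P j)
  have hA : IsAnticommutingInvolution B (Icc 1 m) f (toLinAlgEquiv' Pm) :=
    hPm ▸ hP.isAnticommutingInvolution (Nat.dvd_of_mod_eq_zero hm4) (Nat.even_iff.mpr hr2)
  have hMp' : Mp = focalSet B (Icc 1 m) f := by
    ext x
    simp [hMp, focalSet, psInner_eq_toBilin', B, f]
  have h1 : 1 ∈ Icc 1 m := mem_Icc.mpr ⟨le_rfl, by omega⟩
  have hsum := Submodule.finrank_add_eq_of_isCompl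
    (Module.End.isCompl_eigenspace_one_neg_one hA.mul_self)
  have heq := Module.End.finrank_eigenspace_neg_eq_of_anticomm
    ((hP.isUnit h1).map toLinAlgEquiv') (hA.anticomm 1 h1) 1
  rw [Module.finrank_fin_fun] at hsum
  have hcard : (Icc 1 m).card = m := by simp
  subst hMp'
  refine ⟨hA.focalSet_nonempty (e := Pi.single ⟨2 * l - 1, by omega⟩ 1)
    (by simp [B, psJ, Nat.not_lt.mpr hs]), fun x₀ hx₀ => ?_⟩
  simpa [f] using hA.exists_mixed_mem_connectedComponentIn (isSymm_toBilin'_psJ _ _)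
    (fun j hj => hP.isAdjointPair hj) (by omega) (by omega) hx₀

/-- with `m ≡ 0 (mod 4)`, `r ≡ 0 (mod 2)`, `s ≤ 2l - 1`, `l > m`,
and `P = P_1 ⋯ P_m`: `M₊` is non-empty and for every connected component `L` of `M₊`
there exist `x ∈ E₊(P) \ {0}` and `y ∈ E₋(P) \ {0}` with `x + y ∈ L`. -/
theorem component_contains_mixed_point (l s m r : ℕ) (hl : 0 < l) (hs : s ≤ 2 * l - 1)
    (hm : 2 ≤ m) (hm4 : m % 4 = 0) (hr : r ≤ m) (hr2 : r % 2 = 0) (hlm : m < l)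
    (P : ℕ → Matrix (Fin (2 * l)) (Fin (2 * l)) ℝ)
    (hP : IsCliffordSystem l s m r P)
    (Pm : Matrix (Fin (2 * l)) (Fin (2 * l)) ℝ)
    (hPm : Pm = ((List.range m).map fun k => P (1 + k)).prod)
    (Mp : Set (Fin (2 * l) → ℝ))
    (hMp : Mp = {x | psInner (2 * l) s x x = 1 ∧
      ∀ j ∈ Finset.Icc 1 m, psInner (2 * l) s (P j *ᵥ x) x = 0}) :
    Mp.Nonempty ∧
    ∀ x₀ ∈ Mp, ∃ x y : Fin (2 * l) → ℝ,
      Pm *ᵥ x = x ∧ x ≠ 0 ∧ Pm *ᵥ y = -y ∧ y ≠ 0 ∧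
      x + y ∈ connectedComponentIn Mp x₀ :=
  component_contains_mixed_point_general l s m r hs hm hm4 hr2 hlm P hP Pm hPm Mp hMp
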